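/- Let ε ∈ ℝ^M be a random vector and f: ℝ^D × ℝ^M → ℝ satisfy the additivity of the median (Assumption 3) and the regularity assumption (Assumption 4). Let ε₁, ε₂ be i.i.d. copies of ε and define ε^f(x₁,x₂) := f(x₁;ε₁) − f(x₂;ε₂). Then for any x₁, x₂ ∈ ℝ^D with m_f(x₁) ≠ m_f(x₂), E[sign(ε^f(x₁,x₂))] · sign(m_f(x₁) − m_f(x₂)) > 0. -/

import Mathlib

/-!
Write `X = f(x₁; ε₁)`, `Y = f(x₂; ε₂)` and `m = m_f(x₁) - m_f(x₂)`, which by additivity is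
the median center of `X - Y`. Positive CDF derivatives at the medians give mass to
`(m_f(x₁), m_f(x₁) + δ]` for `X` and to `(m_f(x₂) - δ, m_f(x₂)]` for `Y`, so by independence
the CDF of `X - Y` increases strictly to the right of `m`. For `m > 0` this pushes the median center
below `m` unless `Pr[X - Y ≤ 0] < 1/2`; for `m < 0` it pushes it above `m` unless
`Pr[X - Y < 0] > 1/2`. Since `E[sign(X - Y)] = Pr[X - Y > 0] - Pr[X - Y < 0]`, its sign is that
of `m`.
-/

open MeasureTheory ProbabilityTheory

/-- The center of the median of a real random variable `Y` under measure `μ`: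
`(inf {t : F(t) > 1/2} + sup {t : F(t) < 1/2}) / 2` where `F` is the CDF of `Y`. -/
noncomputable def medCenter {Ω : Type*} [MeasurableSpace Ω] (μ : Measure Ω) (Y : Ω → ℝ) : ℝ :=
  (sInf {t : ℝ | 1 / 2 < (μ {ω | Y ω ≤ t}).toReal} +
    sSup {t : ℝ | (μ {ω | Y ω ≤ t}).toReal < 1 / 2}) / 2

open Filter Set Topology

section RealFunction

variable {F : ℝ → ℝ} {d m t : ℝ}

lemma Monotone.lt_of_hasDerivAt_pos_of_lt (hF : Monotone F) (hd : HasDerivAt F d m)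
    (hd₀ : 0 < d) (ht : m < t) : F m < F t := by
  have hslope : ∀ᶠ s in 𝓝[>] m, 0 < slope F m s :=
    ((hasDerivAt_iff_tendsto_slope.1 hd).eventually (eventually_gt_nhds hd₀)).filter_mono
      (nhdsGT_le_nhdsNE m)
  obtain ⟨s, hs, hms, hst⟩ := (hslope.and (Ioo_mem_nhdsGT ht)).exists
  exact ((slope_pos_iff hms).1 hs).trans_le (hF hst.le)

lemma Monotone.lt_of_hasDerivAt_pos_of_gt (hF : Monotone F) (hd : HasDerivAt F d m)
    (hd₀ : 0 < d) (ht : t < m) : F t < F m := by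
  have hslope : ∀ᶠ s in 𝓝[<] m, 0 < slope F m s :=
    ((hasDerivAt_iff_tendsto_slope.1 hd).eventually (eventually_gt_nhds hd₀)).filter_mono
      (nhdsLT_le_nhdsNE m)
  obtain ⟨s, hs, hts, hsm⟩ := (hslope.and (Ioo_mem_nhdsLT ht)).exists
  exact (hF hts.le).trans_lt ((slope_pos_iff_gt hsm).1 hs)

lemma median_le_half_of_half_le_apply_zero (hF : Monotone F)
    (hinc : ∀ t, m < t → F m < F t) (h₀ : 1 / 2 ≤ F 0) (hm : 0 ≤ m) :
    (sInf {t | 1 / 2 < F t} + sSup {t | F t < 1 / 2}) / 2 ≤ m / 2 := by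
  have hsup : sSup {t | F t < 1 / 2} ≤ 0 :=
    Real.sSup_nonpos fun t ht => not_lt.1 fun h => (h₀.trans (hF h.le)).not_gt ht
  have hsub : Ioi m ⊆ {t | 1 / 2 < F t} := fun t ht =>
    (h₀.trans (hF hm)).trans_lt (hinc t ht)
  have hinf : sInf {t | 1 / 2 < F t} ≤ m := by
    by_cases hbdd : BddBelow {t | 1 / 2 < F t}
    · exact csInf_Ioi (a := m) ▸ csInf_le_csInf hbdd nonempty_Ioi hsub
    · exact (Real.sInf_of_not_bddBelow hbdd).trans_le hm
  linarith

lemma half_le_median_of_apply_le_half (hinc : ∀ t, m < t → F m < F t)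
    (h : ∀ t < 0, F t ≤ 1 / 2) (hm : m < 0) :
    m / 2 ≤ (sInf {t | 1 / 2 < F t} + sSup {t | F t < 1 / 2}) / 2 := by
  have hinf : 0 ≤ sInf {t | 1 / 2 < F t} :=
    Real.sInf_nonneg fun t ht => not_lt.1 fun h' => (h t h').not_gt ht
  have hFm : F m < 1 / 2 :=
    (hinc (m / 2) (by linarith)).trans_le (h (m / 2) (by linarith))
  have hsup : m ≤ sSup {t | F t < 1 / 2} := by
    by_cases hbdd : BddAbove {t | F t < 1 / 2}
    · exact le_csSup hbdd hFm
    · exact (Real.sSup_of_not_bddAbove hbdd).symm ▸ hm.le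
  linarith

end RealFunction

section Probability

variable {Ω : Type*} [MeasurableSpace Ω] {μ : Measure Ω} {X Y Z : Ω → ℝ}

lemma monotone_measureReal_le [IsFiniteMeasure μ] :
    Monotone fun t => μ.real {ω | X ω ≤ t} :=
  fun _ _ hst => measureReal_mono fun _ h => le_trans h hst

lemma measureReal_le_sub_measureReal_le [IsFiniteMeasure μ] (hX : Measurable X) {s t : ℝ}
    (hst : s ≤ t) :
    μ.real {ω | X ω ≤ t} - μ.real {ω | X ω ≤ s} = μ.real (X ⁻¹' Ioc s t) := by
  have hunion : {ω | X ω ≤ t} = {ω | X ω ≤ s} ∪ X ⁻¹' Ioc s t := by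
    ext ω
    simp only [mem_ofPred_eq, mem_union, mem_preimage, mem_Ioc]
    constructor
    · intro h; exact (le_or_gt (X ω) s).imp_right fun h' => ⟨h', h⟩
    · rintro (h | h); exacts [h.trans hst, h.2]
  rw [hunion, measureReal_union _ (hX measurableSet_Ioc), add_sub_cancel_left]
  exact disjoint_left.2 fun ω h h' => h'.1.not_ge h

lemma ProbabilityTheory.IndepFun.measureReal_sub_le_lt [IsFiniteMeasure μ]
    (hXY : IndepFun X Y μ) (hX : Measurable X) (hY : Measurable Y) {a b t : ℝ}
    (hXinc : ∀ s, a < s → μ.real {ω | X ω ≤ a} < μ.real {ω | X ω ≤ s})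
    (hYinc : ∀ s, s < b → μ.real {ω | Y ω ≤ s} < μ.real {ω | Y ω ≤ b}) (ht : a - b < t) :
    μ.real {ω | X ω - Y ω ≤ a - b} < μ.real {ω | X ω - Y ω ≤ t} := by
  obtain ⟨δ, hδ, rfl⟩ : ∃ δ, 0 < δ ∧ a - b + 2 * δ = t :=
    ⟨(t - (a - b)) / 2, by linarith, by ring⟩
  have hXpos : 0 < μ.real (X ⁻¹' Ioc a (a + δ)) := by
    rw [← measureReal_le_sub_measureReal_le hX (by linarith), sub_pos]
    exact hXinc _ (by linarith)
  have hYpos : 0 < μ.real (Y ⁻¹' Ioc (b - δ) b) := by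
    rw [← measureReal_le_sub_measureReal_le hY (by linarith), sub_pos]
    exact hYinc _ (by linarith)
  have hboth : 0 < μ.real (X ⁻¹' Ioc a (a + δ) ∩ Y ⁻¹' Ioc (b - δ) b) := by
    rw [measureReal_def, hXY.measure_inter_preimage_eq_mul _ _ measurableSet_Ioc
      measurableSet_Ioc, ENNReal.toReal_mul]
    exact mul_pos hXpos hYpos
  have hsub : X ⁻¹' Ioc a (a + δ) ∩ Y ⁻¹' Ioc (b - δ) b ⊆
      (fun ω => X ω - Y ω) ⁻¹' Ioc (a - b) (a - b + 2 * δ) := by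
    rintro ω ⟨⟨hX₁, hX₂⟩, ⟨hY₁, hY₂⟩⟩
    constructor <;> linarith
  rw [← sub_pos,
    measureReal_le_sub_measureReal_le (X := fun ω => X ω - Y ω) (hX.sub hY) ht.le]
  exact hboth.trans_le (measureReal_mono hsub)

lemma integral_sign_eq [IsFiniteMeasure μ] (hZ : Measurable Z) :
    ∫ ω, Real.sign (Z ω) ∂μ = μ.real {ω | 0 < Z ω} - μ.real {ω | Z ω < 0} := by
  have hsign : (fun ω => Real.sign (Z ω)) =
      fun ω => {ω | 0 < Z ω}.indicator 1 ω - {ω | Z ω < 0}.indicator 1 ω := by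
    ext ω
    rcases lt_trichotomy (Z ω) 0 with h | h | h
    · simp [Real.sign_of_neg h, h, h.not_gt]
    · simp [h]
    · simp [Real.sign_of_pos h, h, h.not_gt]
  have hpos : MeasurableSet {ω | 0 < Z ω} := measurableSet_lt measurable_const hZ
  have hneg : MeasurableSet {ω | Z ω < 0} := measurableSet_lt hZ measurable_const
  rw [hsign, integral_sub ((integrable_const 1).indicator hpos)
    ((integrable_const 1).indicator hneg), integral_indicator_one hpos,
    integral_indicator_one hneg]

lemma integral_sign_mul_sign_medCenter_pos [IsProbabilityMeasure μ] (hZ : Measurable Z)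
    (hinc : ∀ t, medCenter μ Z < t →
      μ.real {ω | Z ω ≤ medCenter μ Z} < μ.real {ω | Z ω ≤ t})
    (h₀ : medCenter μ Z ≠ 0) :
    0 < (∫ ω, Real.sign (Z ω) ∂μ) * Real.sign (medCenter μ Z) := by
  have hpos : μ.real {ω | 0 < Z ω} = 1 - μ.real {ω | Z ω ≤ 0} := by
    rw [← probReal_compl_eq_one_sub (measurableSet_le hZ measurable_const)]
    congr 1
    ext ω
    simp
  have hneg : μ.real {ω | Z ω < 0} ≤ μ.real {ω | Z ω ≤ 0} :=
    measureReal_mono fun _ (h : Z _ < 0) => h.le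
  have hmed : medCenter μ Z = (sInf {t | 1 / 2 < μ.real {ω | Z ω ≤ t}} +
      sSup {t | μ.real {ω | Z ω ≤ t} < 1 / 2}) / 2 := rfl
  rw [integral_sign_eq hZ]
  rcases h₀.lt_or_gt with hm | hm
  · obtain ⟨t, ht, hFt⟩ : ∃ t < 0, 1 / 2 < μ.real {ω | Z ω ≤ t} := by
      by_contra! h
      linarith [half_le_median_of_apply_le_half hinc h hm]
    have : μ.real {ω | Z ω ≤ t} ≤ μ.real {ω | Z ω < 0} :=
      measureReal_mono fun _ h => lt_of_le_of_lt h ht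
    rw [Real.sign_of_neg hm]
    linarith
  · have hF₀ : μ.real {ω | Z ω ≤ 0} < 1 / 2 := by
      by_contra! h
      linarith [median_le_half_of_half_le_apply_zero (monotone_measureReal_le (X := Z)) hinc h
        hm.le]
    rw [Real.sign_of_pos hm]
    linarith

end Probability

/-- Under additivity of the median (Assumption 3) and the regularity assumption
(Assumption 4), the expectation of the sign of `ε^f(x₁,x₂) = f(x₁;ε₁) - f(x₂;ε₂)` has
strictly the same sign as `m_f(x₁) - m_f(x₂)` whenever the latter is nonzero
(second part of Proposition 5 of the paper). -/
theorem statement12 {Ω : Type*} [MeasurableSpace Ω] (μ : Measure Ω) [IsProbabilityMeasure μ]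
    (D M : ℕ) (f : (Fin D → ℝ) → (Fin M → ℝ) → ℝ) (hf : ∀ x, Measurable (f x))
    (ε₁ ε₂ : Ω → Fin M → ℝ) (hε₁ : Measurable ε₁) (hε₂ : Measurable ε₂)
    (hid : μ.map ε₁ = μ.map ε₂) (hindep : IndepFun ε₁ ε₂ μ)
    (hmed_add : ∀ x y : Fin D → ℝ,
      medCenter μ (fun ω => f x (ε₁ ω) - f y (ε₂ ω)) =
        medCenter μ (fun ω => f x (ε₁ ω)) - medCenter μ (fun ω => f y (ε₁ ω)))
    (hreg : ∀ x : Fin D → ℝ, ∃ d : ℝ, 0 < d ∧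
      HasDerivAt (fun t => (μ {ω | f x (ε₁ ω) ≤ t}).toReal) d
        (medCenter μ (fun ω => f x (ε₁ ω)))) :
    ∀ x₁ x₂ : Fin D → ℝ,
      medCenter μ (fun ω => f x₁ (ε₁ ω)) ≠ medCenter μ (fun ω => f x₂ (ε₁ ω)) →
      0 < (∫ ω, Real.sign (f x₁ (ε₁ ω) - f x₂ (ε₂ ω)) ∂μ) *
        Real.sign (medCenter μ (fun ω => f x₁ (ε₁ ω)) -
          medCenter μ (fun ω => f x₂ (ε₁ ω))) := by
  intro x₁ x₂ hne
  have hX : Measurable fun ω => f x₁ (ε₁ ω) := (hf x₁).comp hε₁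
  have hY : Measurable fun ω => f x₂ (ε₂ ω) := (hf x₂).comp hε₂
  obtain ⟨d₁, hd₁, hF₁⟩ := hreg x₁
  obtain ⟨d₂, hd₂, hF₂⟩ := hreg x₂
  have hlaw : IdentDistrib (fun ω => f x₂ (ε₁ ω)) (fun ω => f x₂ (ε₂ ω)) μ μ :=
    (IdentDistrib.mk hε₁.aemeasurable hε₂.aemeasurable hid).comp (hf x₂)
  have hF₂' : HasDerivAt (fun t => μ.real {ω | f x₂ (ε₂ ω) ≤ t}) d₂
      (medCenter μ fun ω => f x₂ (ε₁ ω)) := by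
    convert hF₂ using 2 with t
    exact congrArg ENNReal.toReal (hlaw.measure_mem_eq measurableSet_Iic).symm
  rw [← sub_ne_zero, ← hmed_add] at hne
  rw [← hmed_add]
  refine integral_sign_mul_sign_medCenter_pos (hX.sub hY) (fun t ht => ?_) hne
  rw [hmed_add] at ht ⊢
  exact (hindep.comp (hf x₁) (hf x₂)).measureReal_sub_le_lt hX hY
    (fun s => monotone_measureReal_le.lt_of_hasDerivAt_pos_of_lt hF₁ hd₁)
    (fun s => monotone_measureReal_le.lt_of_hasDerivAt_pos_of_gt hF₂' hd₂) ht
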